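/- Let H be a connected triangle-free graph with maximum degree at most three and at least 7 vertices. Then there exist t ∈ ℕ and a partition V(H) = B₁ ∪ ⋯ ∪ B_t such that: (1) for each i, the subgraph of H induced by B_i is either a path or a cycle of length at least five; and (2) for every i ∈ {2,…,t}, each vertex of B_i has at most one neighbour in B₁ ∪ ⋯ ∪ B_{i−1}. -/

import Mathlib

/-!
Blocks are split off from the end: it suffices that every nonempty `S ⊆ V` contains a block `P`
(a vertex, an induced path, or an induced cycle of length at least five) each of whose vertices
has at most one neighbour in `S \ P`; one then decomposes `S \ P` and appends `P`. Since the
maximum degree is three, vertices with two neighbours inside `P` are harmless, so only a lone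
vertex or the two ends of a path need attention.

If every vertex of `S` has two neighbours in `S`, take a longest induced path `x₀ … x_{n-1}` in
`S`. By maximality and triangle-freeness, every neighbour `y` of `x₀` off the path is adjacent to
some `x_i` with `i ≥ 2`; if the least such `i` is at least `3`, then `y x₀ … x_i` is an induced
cycle of length at least five. Otherwise all these `y` are adjacent to `x₂`, which for `n ≥ 4`
already has the neighbours `x₁, x₃`, so each end of the path has at most one neighbour off the
path. For `n = 3`, a short case analysis yields either a suitable three-vertex path or a `K₃,₃`,
which by the degree bound is the whole connected graph, contradicting `7 ≤ |V|`.
-/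

open Set

namespace SimpleGraph

variable {V : Type*} {G : SimpleGraph V}

lemma cycleGraph_adj_zero_succ {n : ℕ} {j : Fin (n + 1)} :
    (cycleGraph (n + 2)).Adj 0 j.succ ↔ j = 0 ∨ j = Fin.last n := by
  rw [cycleGraph_adj', Fin.coe_sub_iff_lt.2 (Fin.succ_pos j), Fin.sub_val_of_le (Fin.zero_le _)]
  simp only [Fin.val_zero, Fin.val_succ, Fin.ext_iff, Fin.val_last]
  omega

lemma cycleGraph_adj_succ_succ {n : ℕ} {i j : Fin (n + 1)} :
    (cycleGraph (n + 2)).Adj i.succ j.succ ↔ (pathGraph (n + 1)).Adj i j := by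
  rw [cycleGraph_adj', pathGraph_adj]
  rcases eq_or_ne i j with rfl | hij
  · simp
  rcases hij.lt_or_gt with h | h <;>
  · rw [Fin.coe_sub_iff_lt.2 (Fin.succ_lt_succ_iff.2 h),
      Fin.sub_val_of_le (Fin.succ_le_succ_iff.2 h.le)]
    simp only [Fin.val_succ, Fin.lt_def] at h ⊢
    omega

namespace Embedding

def pathCons {n : ℕ} (f : pathGraph n ↪g G) (y : V) (hy : y ∉ range f)
    (hadj : ∀ i, G.Adj y (f i) ↔ i.val = 0) : pathGraph (n + 1) ↪g G where
  toFun := Fin.cons y f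
  inj' := Fin.cons_injective_iff.2 ⟨hy, f.injective⟩
  map_rel_iff' {i j} := by
    induction i using Fin.cases <;> induction j using Fin.cases <;>
      simp [pathGraph_adj, hadj, G.adj_comm _ y]

@[simp]
lemma range_pathCons {n : ℕ} (f : pathGraph n ↪g G) (y : V) (hy : y ∉ range f)
    (hadj : ∀ i, G.Adj y (f i) ↔ i.val = 0) : range (f.pathCons y hy hadj) = insert y (range f) :=
  Fin.range_cons y f

def cycleCons {n : ℕ} (f : pathGraph (n + 1) ↪g G) (y : V) (hy : y ∉ range f)
    (hadj : ∀ i, G.Adj y (f i) ↔ i = 0 ∨ i = Fin.last n) : cycleGraph (n + 2) ↪g G where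
  toFun := Fin.cons y f
  inj' := Fin.cons_injective_iff.2 ⟨hy, f.injective⟩
  map_rel_iff' {i j} := by
    induction i using Fin.cases <;> induction j using Fin.cases <;>
      simp [cycleGraph_adj_zero_succ, cycleGraph_adj_succ_succ, hadj, G.adj_comm _ y,
        (cycleGraph _).adj_comm _ 0]

@[simp]
lemma range_cycleCons {n : ℕ} (f : pathGraph (n + 1) ↪g G) (y : V) (hy : y ∉ range f)
    (hadj : ∀ i, G.Adj y (f i) ↔ i = 0 ∨ i = Fin.last n) :
    range (f.cycleCons y hy hadj) = insert y (range f) :=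
  Fin.range_cons y f

def pathReverse {n : ℕ} (f : pathGraph n ↪g G) : pathGraph n ↪g G where
  toFun i := f i.rev
  inj' := f.injective.comp Fin.rev_injective
  map_rel_iff' {i j} := by
    change G.Adj (f i.rev) (f j.rev) ↔ _
    simp only [f.map_adj_iff, pathGraph_adj, Fin.val_rev]
    omega

@[simp]
lemma pathReverse_apply {n : ℕ} (f : pathGraph n ↪g G) (i : Fin n) : f.pathReverse i = f i.rev :=
  rfl

@[simp]
lemma range_pathReverse {n : ℕ} (f : pathGraph n ↪g G) : range f.pathReverse = range f :=
  Fin.revPerm.surjective.range_comp f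

def pathTake {m n : ℕ} (f : pathGraph n ↪g G) (h : m ≤ n) : pathGraph m ↪g G where
  toFun i := f (Fin.castLE h i)
  inj' := f.injective.comp (Fin.castLE_injective h)
  map_rel_iff' {i j} := by
    simp [f.map_adj_iff, pathGraph_adj]

@[simp]
lemma pathTake_apply {m n : ℕ} (f : pathGraph n ↪g G) (h : m ≤ n) (i : Fin m) :
    f.pathTake h i = f (Fin.castLE h i) :=
  rfl

lemma range_pathTake_subset {m n : ℕ} (f : pathGraph n ↪g G) (h : m ≤ n) :
    range (f.pathTake h) ⊆ range f := by
  rintro _ ⟨i, rfl⟩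
  exact mem_range_self _

end Embedding

def pathThreeEmbedding {a b c : V} (hab : G.Adj a b) (hbc : G.Adj b c) (hac : ¬G.Adj a c)
    (hne : a ≠ c) : pathGraph 3 ↪g G where
  toFun := ![a, b, c]
  inj' := by
    intro i j h
    fin_cases i <;> fin_cases j <;> simp_all [hab.ne, hbc.ne, hab.ne.symm, hbc.ne.symm, hne.symm]
  map_rel_iff' {i j} := by
    change G.Adj (![a, b, c] i) (![a, b, c] j) ↔ _
    fin_cases i <;> fin_cases j <;> simp [pathGraph_adj, hab, hbc, hac, hab.symm, hbc.symm,
      G.adj_comm c a]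

@[simp]
lemma range_pathThreeEmbedding {a b c : V} (hab : G.Adj a b) (hbc : G.Adj b c)
    (hac : ¬G.Adj a c) (hne : a ≠ c) : range (pathThreeEmbedding hab hbc hac hne) = {a, b, c} := by
  change range ![a, b, c] = _
  rw [Matrix.range_cons, Matrix.range_cons_cons_empty, singleton_union]

lemma CliqueFree.not_adj_of_adj_adj (htf : G.CliqueFree 3) {a b c : V} (hab : G.Adj a b)
    (hbc : G.Adj b c) : ¬G.Adj a c := fun hac => by
  classical exact htf {a, b, c} (is3Clique_triple_iff.2 ⟨hab, hac, hbc⟩)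

lemma Preconnected.eq_univ_of_adj_mem (hconn : G.Preconnected) {K : Set V} (hK : K.Nonempty)
    (hclosed : ∀ u ∈ K, ∀ v, G.Adj u v → v ∈ K) : K = univ := by
  obtain ⟨u, hu⟩ := hK
  refine eq_univ_of_forall fun v => ?_
  obtain ⟨p⟩ := hconn u v
  induction p with
  | nil => exact hu
  | cons h _ ih => exact ih (hclosed _ hu _ h)

variable (G) in
def IsPathOrLongCycle (B : Set V) : Prop :=
  (∃ m, Nonempty (G.induce B ≃g pathGraph m)) ∨
    ∃ m, 5 ≤ m ∧ Nonempty (G.induce B ≃g cycleGraph m)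

variable (G) in
/-- `P` can serve as the last block of a decomposition of `S`. -/
def IsPeelableBlock (S P : Set V) : Prop :=
  P.Nonempty ∧ P ⊆ S ∧ G.IsPathOrLongCycle P ∧
    ∀ v ∈ P, (G.neighborSet v ∩ (S \ P)).Subsingleton

lemma isPeelableBlock_singleton {S : Set V} {v : V} (hv : v ∈ S)
    (h : (G.neighborSet v ∩ S).Subsingleton) : G.IsPeelableBlock S {v} := by
  refine ⟨singleton_nonempty v, singleton_subset_iff.2 hv, Or.inl ⟨1, ⟨?_⟩⟩, ?_⟩
  · refine ⟨Equiv.ofUnique _ _, fun {x y} => ?_⟩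
    rw [Subsingleton.elim x y]
    simp
  · rintro _ rfl
    exact h.anti (inter_subset_inter_right _ sdiff_subset)

section MaxDegreeThree

variable [Finite V] (hdeg : ∀ v, (G.neighborSet v).ncard ≤ 3)
include hdeg

lemma eq_or_eq_or_eq_of_adj {v a b c u : V}
    (hab : a ≠ b) (hac : a ≠ c) (hbc : b ≠ c) (ha : G.Adj v a) (hb : G.Adj v b)
    (hc : G.Adj v c) (hu : G.Adj v u) : u = a ∨ u = b ∨ u = c := by
  by_contra! h
  have hsub : ({u, a, b, c} : Set V) ⊆ G.neighborSet v := by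
    simp [insert_subset_iff, hu, ha, hb, hc]
  have := (ncard_le_ncard hsub).trans (hdeg v)
  rw [ncard_insert_of_notMem (by simp [h.1, h.2.1, h.2.2]),
    ncard_insert_of_notMem (by simp [hab, hac]), ncard_pair hbc] at this
  omega

lemma subsingleton_neighborSet_inter {v a b : V}
    {A : Set V} (hab : a ≠ b) (ha : G.Adj v a) (hb : G.Adj v b) (haA : a ∉ A) (hbA : b ∉ A) :
    (G.neighborSet v ∩ A).Subsingleton := by
  rintro c ⟨hc, hcA⟩ d ⟨hd, hdA⟩
  rcases eq_or_eq_or_eq_of_adj hdeg hab (ne_of_mem_of_not_mem hcA haA).symm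
    (ne_of_mem_of_not_mem hcA hbA).symm ha hb hc hd with rfl | rfl | rfl
  · exact absurd hdA haA
  · exact absurd hdA hbA
  · rfl

lemma card_le_six_of_forall_adj (hconn : G.Connected) {A B : Set V} (hA : A.ncard = 3)
    (hB : B.ncard = 3) (hadj : ∀ a ∈ A, ∀ b ∈ B, G.Adj a b) : Nat.card V ≤ 6 := by
  have hA' : ∀ b ∈ B, G.neighborSet b = A := fun b hb =>
    (eq_of_subset_of_ncard_le (fun a ha => (hadj a ha b hb).symm) (hA ▸ hdeg b)).symm
  have hB' : ∀ a ∈ A, G.neighborSet a = B := fun a ha =>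
    (eq_of_subset_of_ncard_le (fun b hb => hadj a ha b hb) (hB ▸ hdeg a)).symm
  have hAB : A ∪ B = univ := by
    refine hconn.preconnected.eq_univ_of_adj_mem (nonempty_of_ncard_ne_zero (by omega)).inl ?_
    rintro u (hu | hu) v huv
    · exact .inr (hB' u hu ▸ huv)
    · exact .inl (hA' u hu ▸ huv)
  rw [← ncard_univ, ← hAB]
  exact (ncard_union_le A B).trans (by omega)

lemma isPeelableBlock_range_path {S : Set V} {n : ℕ} (f : pathGraph (n + 1) ↪g G)
    (hS : range f ⊆ S) (h₀ : (G.neighborSet (f 0) ∩ (S \ range f)).Subsingleton)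
    (hlast : (G.neighborSet (f (Fin.last n)) ∩ (S \ range f)).Subsingleton) :
    G.IsPeelableBlock S (range f) := by
  refine ⟨range_nonempty f, hS, Or.inl ⟨n + 1, ⟨f.isoInduceRange.symm⟩⟩, ?_⟩
  rintro _ ⟨i, rfl⟩
  rcases eq_or_ne i 0 with rfl | hi₀
  · exact h₀
  rcases eq_or_ne i (Fin.last n) with rfl | hilast
  · exact hlast
  have h₁ : 0 < i.val := Fin.pos_iff_ne_zero.2 hi₀
  have h₂ : i.val < n := Fin.val_lt_last hilast
  refine subsingleton_neighborSet_inter hdeg (a := f ⟨i - 1, by omega⟩) (b := f ⟨i + 1, by omega⟩)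
    (f.injective.ne (by simp [Fin.ext_iff])) (f.map_adj_iff.2 ?_) (f.map_adj_iff.2 ?_)
    (fun h => h.2 (mem_range_self _)) (fun h => h.2 (mem_range_self _))
  · simp only [pathGraph_adj]
    omega
  · simp [pathGraph_adj]

lemma isPeelableBlock_range_cycle {S : Set V} {n : ℕ} (f : cycleGraph n ↪g G) (hn : 5 ≤ n)
    (hS : range f ⊆ S) : G.IsPeelableBlock S (range f) := by
  obtain ⟨k, rfl⟩ : ∃ k, n = k + 3 := ⟨n - 3, by omega⟩
  refine ⟨range_nonempty f, hS, Or.inr ⟨k + 3, hn, ⟨f.isoInduceRange.symm⟩⟩, ?_⟩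
  rintro _ ⟨i, rfl⟩
  obtain ⟨a, b, hab, hnb⟩ := Finset.card_eq_two.1 (cycleGraph_degree_three_le (v := i))
  have hadj : ∀ x ∈ ({a, b} : Finset _), (cycleGraph (k + 3)).Adj i x := fun x hx => by
    rwa [← hnb, mem_neighborFinset] at hx
  exact subsingleton_neighborSet_inter hdeg (f.injective.ne hab)
    (f.map_adj_iff.2 (hadj a (by simp))) (f.map_adj_iff.2 (hadj b (by simp)))
    (fun h => h.2 (mem_range_self _)) (fun h => h.2 (mem_range_self _))

end MaxDegreeThree

/-- Embeddings `pathGraph n ↪g G` are exactly the induced paths on `n` vertices, as `↪g` also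
reflects adjacency. -/
def IsLongestInducedPath (S : Set V) {n : ℕ} (f : pathGraph n ↪g G) : Prop :=
  range f ⊆ S ∧ ∀ m (g : pathGraph m ↪g G), range g ⊆ S → m ≤ n

lemma exists_isLongestInducedPath [Finite V] (S : Set V) :
    ∃ n, ∃ f : pathGraph n ↪g G, IsLongestInducedPath S f := by
  classical
  let P m := ∃ g : pathGraph m ↪g G, range g ⊆ S
  have hP : ∀ m, P m → m ≤ Nat.card V := fun m ⟨g, _⟩ => by
    simpa using Nat.card_le_card_of_injective g g.injective
  have h₀ : P 0 := ⟨⟨⟨Fin.elim0, fun i => i.elim0⟩, fun {i} => i.elim0⟩, fun _ ⟨i, _⟩ => i.elim0⟩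
  obtain ⟨f, hf⟩ := Nat.findGreatest_spec (Nat.zero_le _) h₀
  exact ⟨_, f, hf, fun m g hg => Nat.le_findGreatest (hP m ⟨g, hg⟩) ⟨g, hg⟩⟩

lemma exists_adj_zero_notMem_range {S : Set V} {n : ℕ} (f : pathGraph (n + 1) ↪g G)
    (h : (G.neighborSet (f 0) ∩ S).Nontrivial) : ∃ y ∈ S \ range f, G.Adj (f 0) y := by
  by_contra! hall
  have key : ∀ u ∈ S, G.Adj (f 0) u → ∃ i : Fin (n + 1), i.val = 1 ∧ f i = u := by
    intro u huS hu
    obtain ⟨i, rfl⟩ : u ∈ range f := by_contra fun h => hall u ⟨huS, h⟩ hu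
    have := f.map_adj_iff.1 hu
    simp only [pathGraph_adj, Fin.val_zero] at this
    exact ⟨i, by omega, rfl⟩
  obtain ⟨p, ⟨hp, hpS⟩, q, ⟨hq, hqS⟩, hpq⟩ := h
  obtain ⟨i, hi, rfl⟩ := key p hpS hp
  obtain ⟨j, hj, rfl⟩ := key q hqS hq
  exact hpq (congrArg f (Fin.ext (hi.trans hj.symm)))

namespace IsLongestInducedPath

variable {S : Set V} {n : ℕ} {y : V}

lemma pathReverse {f : pathGraph n ↪g G} (hf : IsLongestInducedPath S f) :
    IsLongestInducedPath S f.pathReverse := by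
  simpa [IsLongestInducedPath] using hf

lemma not_forall_adj_iff {f : pathGraph n ↪g G} (hf : IsLongestInducedPath S f) (hyS : y ∈ S)
    (hy : y ∉ range f) : ¬∀ i, G.Adj y (f i) ↔ i.val = 0 := fun hadj => by
  have := hf.2 _ (f.pathCons y hy hadj) (by simpa [insert_subset_iff] using ⟨hyS, hf.1⟩)
  omega

lemma exists_two_le_adj (htf : G.CliqueFree 3) {f : pathGraph (n + 1) ↪g G}
    (hf : IsLongestInducedPath S f) (hyS : y ∈ S) (hy : y ∉ range f) (hadj : G.Adj (f 0) y) :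
    ∃ i, 2 ≤ i.val ∧ G.Adj y (f i) := by
  by_contra! h
  refine hf.not_forall_adj_iff hyS hy fun i => ?_
  rcases (by omega : i.val = 0 ∨ i.val = 1 ∨ 2 ≤ i.val) with hi | hi | hi
  · simpa [hi, show i = 0 from Fin.ext hi] using hadj.symm
  · refine iff_of_false (htf.not_adj_of_adj_adj hadj.symm ?_) (by omega)
    exact f.map_adj_iff.2 (by simp [pathGraph_adj, hi])
  · exact iff_of_false (h i hi) (by omega)

variable [Finite V] (hdeg : ∀ v, (G.neighborSet v).ncard ≤ 3) (htf : G.CliqueFree 3)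
  (hnone : ∀ P, ¬G.IsPeelableBlock S P)
include hdeg htf hnone

/-- If the least `i ≥ 2` with `G.Adj y (f i)` exceeded `2`, then `y, f 0, …, f i` would be a
peelable induced cycle of length at least five. -/
lemma adj_two_of_adj_zero {f : pathGraph (n + 3) ↪g G} (hf : IsLongestInducedPath S f)
    (hyS : y ∈ S) (hy : y ∉ range f) (hadj : G.Adj (f 0) y) : G.Adj y (f ⟨2, by omega⟩) := by
  classical
  have hex : ∃ m, ∃ h : m < n + 3, 2 ≤ m ∧ G.Adj y (f ⟨m, h⟩) := by
    obtain ⟨i, hi, h⟩ := hf.exists_two_le_adj htf hyS hy hadj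
    exact ⟨i, i.2, hi, h⟩
  obtain ⟨m, ⟨hm, h2m, hym⟩, hmin⟩ : ∃ m, (∃ h : m < n + 3, 2 ≤ m ∧ G.Adj y (f ⟨m, h⟩)) ∧
      ∀ k < m, ¬∃ h : k < n + 3, 2 ≤ k ∧ G.Adj y (f ⟨k, h⟩) :=
    ⟨Nat.find hex, Nat.find_spec hex, fun k hk => Nat.find_min hex hk⟩
  rcases h2m.eq_or_lt with rfl | h3
  · exact hym
  exfalso
  let g := f.pathTake (m := m + 1) hm
  have hyg : y ∉ range g := fun h => hy (f.range_pathTake_subset _ h)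
  have hadjg : ∀ i, G.Adj y (g i) ↔ i = 0 ∨ i = Fin.last m := by
    intro i
    simp only [g, Embedding.pathTake_apply, Fin.ext_iff, Fin.val_zero, Fin.val_last]
    rcases (by omega : i.val = 0 ∨ i.val = 1 ∨ (2 ≤ i.val ∧ i.val < m) ∨ i.val = m)
      with hi | hi | ⟨hi₂, him⟩ | hi
    · simpa [hi, show Fin.castLE hm i = 0 from Fin.ext hi] using hadj.symm
    · refine iff_of_false (htf.not_adj_of_adj_adj hadj.symm ?_) (by omega)
      exact f.map_adj_iff.2 (by simp [pathGraph_adj, hi])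
    · exact iff_of_false (fun h => hmin i him ⟨_, hi₂, h⟩) (by omega)
    · simpa [hi, show Fin.castLE hm i = ⟨m, hm⟩ from Fin.ext hi] using hym
  refine hnone _ (isPeelableBlock_range_cycle hdeg (g.cycleCons y hyg hadjg) (by omega) ?_)
  simpa [insert_subset_iff] using ⟨hyS, (f.range_pathTake_subset _).trans hf.1⟩

lemma subsingleton_neighborSet_zero {f : pathGraph (n + 4) ↪g G}
    (hf : IsLongestInducedPath S f) : (G.neighborSet (f 0) ∩ (S \ range f)).Subsingleton := by
  have h₂ : (G.neighborSet (f ⟨2, by omega⟩) ∩ (S \ range f)).Subsingleton :=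
    subsingleton_neighborSet_inter hdeg (a := f ⟨1, by omega⟩) (b := f ⟨3, by omega⟩)
      (f.injective.ne (by simp))
      (f.map_adj_iff.2 (by simp [pathGraph_adj])) (f.map_adj_iff.2 (by simp [pathGraph_adj]))
      (fun h => h.2 (mem_range_self _)) (fun h => h.2 (mem_range_self _))
  exact h₂.anti fun y ⟨hy, hyS, hyf⟩ =>
    ⟨(hf.adj_two_of_adj_zero hdeg htf hnone hyS hyf hy).symm, hyS, hyf⟩

end IsLongestInducedPath

section MaxDegreeThree

variable [Finite V] (hdeg : ∀ v, (G.neighborSet v).ncard ≤ 3) (htf : G.CliqueFree 3)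
include hdeg htf

lemma isPeelableBlock_triple {S : Set V} {a b c : V} (hab : G.Adj a b) (hbc : G.Adj b c)
    (hac : a ≠ c) (hS : {a, b, c} ⊆ S) (ha : (G.neighborSet a ∩ (S \ {a, b, c})).Subsingleton)
    (hc : (G.neighborSet c ∩ (S \ {a, b, c})).Subsingleton) : G.IsPeelableBlock S {a, b, c} := by
  have := isPeelableBlock_range_path hdeg (S := S)
    (pathThreeEmbedding hab hbc (htf.not_adj_of_adj_adj hab hbc) hac)
  rw [range_pathThreeEmbedding] at this
  exact this hS ha hc

lemma adj_of_forall_le_three {S : Set V} (hnone : ∀ P, ¬G.IsPeelableBlock S P)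
    (hlong : ∀ m (g : pathGraph m ↪g G), range g ⊆ S → m ≤ 3) {a b c y : V} (hab : G.Adj a b)
    (hbc : G.Adj b c) (hac : a ≠ c) (hS : {a, b, c} ⊆ S) (hyS : y ∈ S)
    (hy : y ∉ ({a, b, c} : Set V)) (hay : G.Adj a y) : G.Adj y c := by
  let g := pathThreeEmbedding hab hbc (htf.not_adj_of_adj_adj hab hbc) hac
  have hg : range g = {a, b, c} := range_pathThreeEmbedding ..
  exact IsLongestInducedPath.adj_two_of_adj_zero (n := 0) hdeg htf hnone ⟨hg ▸ hS, hlong⟩ hyS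
    (hg ▸ hy) hay

/-- Either a three-vertex path is peelable, or `G` contains a `K₃,₃`, which is then all of `G`. -/
lemma exists_isPeelableBlock_of_forall_le_three (hconn : G.Connected) (hcard : 7 ≤ Nat.card V)
    {S : Set V} (hlong : ∀ m (g : pathGraph m ↪g G), range g ⊆ S → m ≤ 3) {a b c : V}
    (hab : G.Adj a b) (hbc : G.Adj b c) (hac : a ≠ c) (hS : {a, b, c} ⊆ S) :
    ∃ P, G.IsPeelableBlock S P := by
  by_contra! hnone
  have hend {p q r y : V} :=
    adj_of_forall_le_three hdeg htf hnone hlong (a := p) (b := q) (c := r) (y := y)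
  have ha : a ∈ S := hS (by simp)
  have hb : b ∈ S := hS (by simp)
  obtain ⟨y, ⟨hay, hyS, hyT⟩, z, ⟨haz, hzS, hzT⟩, hyz⟩ :
      (G.neighborSet a ∩ (S \ {a, b, c})).Nontrivial := by
    refine not_subsingleton_iff.1 fun h => hnone _ (isPeelableBlock_triple hdeg htf hab hbc hac hS
      h (h.anti ?_))
    rintro u ⟨hcu, huS, huT⟩
    refine ⟨(hend hbc.symm hab.symm hac.symm ?_ huS ?_ hcu).symm, huS, huT⟩ <;>
      simp_all [insert_subset_iff]
  simp only [mem_insert_iff, mem_singleton_iff, not_or] at hyT hzT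
  have hyb : ¬G.Adj b y := htf.not_adj_of_adj_adj hab.symm hay
  have hbay : {b, a, y} ⊆ S := by simp [insert_subset_iff, ha, hb, hyS]
  by_cases hw : ∃ w ∈ S, G.Adj b w ∧ w ≠ a ∧ w ≠ c
  · obtain ⟨w, hwS, hbw, hwa, hwc⟩ := hw
    have hwy' : w ≠ y := fun h => hyb (h ▸ hbw)
    have hwz' : w ≠ z := fun h => htf.not_adj_of_adj_adj hab.symm haz (h ▸ hbw)
    have hyc := hend hab hbc hac hS hyS (by simp [hyT]) hay
    have hzc := hend hab hbc hac hS hzS (by simp [hzT]) haz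
    have hwy := hend hab.symm hay (Ne.symm hyT.2.1) hbay hwS (by simp [hwa, hbw.ne.symm, hwy']) hbw
    have hwz := hend hab.symm haz (Ne.symm hzT.2.1) (by simp [insert_subset_iff, ha, hb, hzS]) hwS
      (by simp [hwa, hbw.ne.symm, hwz']) hbw
    have := card_le_six_of_forall_adj hdeg hconn
      (ncard_eq_three.2 ⟨a, c, w, hac, hwa.symm, hwc.symm, rfl⟩)
      (ncard_eq_three.2 ⟨b, y, z, Ne.symm hyT.2.1, Ne.symm hzT.2.1, hyz, rfl⟩) (by
        simp only [mem_insert_iff, mem_singleton_iff]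
        rintro _ (rfl | rfl | rfl) _ (rfl | rfl | rfl) <;>
          first | assumption | exact Adj.symm ‹_›)
    omega
  · push Not at hw
    refine hnone _ (isPeelableBlock_triple hdeg htf hab.symm hay (Ne.symm hyT.2.1) hbay
      (subsingleton_singleton (a := c) |>.anti fun u ⟨hbu, huS, huT⟩ => ?_)
      (subsingleton_singleton (a := c) |>.anti fun u ⟨hyu, huS, huT⟩ => ?_))
    · simp only [mem_insert_iff, mem_singleton_iff, not_or] at huT
      exact hw u huS hbu huT.2.1
    · simp only [mem_insert_iff, mem_singleton_iff, not_or] at huT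
      refine hw u huS (hend hay.symm hab hyT.2.1 ?_ huS (by simp [huT]) hyu).symm huT.2.1
      simp [insert_subset_iff, ha, hb, hyS]

theorem exists_isPeelableBlock (hconn : G.Connected) (hcard : 7 ≤ Nat.card V) {S : Set V}
    (hS : S.Nonempty) : ∃ P, G.IsPeelableBlock S P := by
  by_contra! hnone
  have hmin : ∀ v ∈ S, (G.neighborSet v ∩ S).Nontrivial := fun v hv =>
    not_subsingleton_iff.1 fun h => hnone _ (isPeelableBlock_singleton hv h)
  obtain ⟨n, f, hf⟩ := exists_isLongestInducedPath (G := G) S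
  obtain ⟨k, rfl⟩ : ∃ k, n = k + 3 := by
    obtain ⟨v, hv⟩ := hS
    rcases n with _ | n
    · exact (hf.not_forall_adj_iff hv (by simp) fun i => i.elim0).elim
    obtain ⟨y, ⟨hyS, hy⟩, hadj⟩ :=
      exists_adj_zero_notMem_range f (hmin _ (hf.1 (mem_range_self 0)))
    obtain ⟨i, hi, -⟩ := hf.exists_two_le_adj htf hyS hy hadj
    exact ⟨n - 2, by omega⟩
  rcases k with _ | k
  · obtain ⟨P, hP⟩ := exists_isPeelableBlock_of_forall_le_three hdeg htf hconn hcard hf.2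
      (a := f 0) (b := f 1) (c := f 2) (f.map_adj_iff.2 (by simp [pathGraph_adj]))
      (f.map_adj_iff.2 (by simp [pathGraph_adj])) (f.injective.ne (by simp))
      (by simp [insert_subset_iff, hf.1 (mem_range_self _)])
    exact hnone P hP
  · exact hnone _ (isPeelableBlock_range_path hdeg f hf.1
      (hf.subsingleton_neighborSet_zero hdeg htf hnone)
      (by simpa using hf.pathReverse.subsingleton_neighborSet_zero hdeg htf hnone))

end MaxDegreeThree

variable (G) in
structure IsBlockDecomposition (S : Set V) {t : ℕ} (B : Fin t → Set V) : Prop where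
  subset (i : Fin t) : B i ⊆ S
  existsUnique {v : V} : v ∈ S → ∃! i, v ∈ B i
  isPathOrLongCycle (i : Fin t) : G.IsPathOrLongCycle (B i)
  subsingleton (i : Fin t) : ∀ v ∈ B i, {w | G.Adj v w ∧ ∃ j < i, w ∈ B j}.Subsingleton

lemma IsBlockDecomposition.snoc {S P : Set V} {t : ℕ} {B : Fin t → Set V}
    (hB : G.IsBlockDecomposition (S \ P) B) (hPS : P ⊆ S) (hP : G.IsPathOrLongCycle P)
    (hout : ∀ v ∈ P, (G.neighborSet v ∩ (S \ P)).Subsingleton) :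
    G.IsBlockDecomposition S (Fin.snoc B P : Fin (t + 1) → Set V) where
  subset i := by
    induction i using Fin.lastCases with
    | last => simpa using hPS
    | cast i => simpa using (hB.subset i).trans sdiff_subset
  existsUnique {v} hv := by
    by_cases hvP : v ∈ P
    · refine ⟨Fin.last t, by simpa, fun j hj => ?_⟩
      induction j using Fin.lastCases with
      | last => rfl
      | cast j => exact absurd hvP (hB.subset j (by simpa using hj)).2
    · obtain ⟨i, hi, huniq⟩ := hB.existsUnique ⟨hv, hvP⟩
      refine ⟨i.castSucc, by simpa, fun j hj => ?_⟩
      induction j using Fin.lastCases with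
      | last => exact absurd (by simpa using hj) hvP
      | cast j => rw [huniq j (by simpa using hj)]
  isPathOrLongCycle i := by
    induction i using Fin.lastCases with
    | last => simpa using hP
    | cast i => simpa using hB.isPathOrLongCycle i
  subsingleton i := by
    induction i using Fin.lastCases with
    | last =>
      intro v hv
      refine (hout v (by simpa using hv)).anti ?_
      rintro w ⟨hvw, j, hj, hw⟩
      obtain ⟨j, rfl⟩ := Fin.exists_castSucc_eq.2 hj.ne
      exact ⟨hvw, hB.subset j (by simpa using hw)⟩
    | cast i =>
      intro v hv
      refine (hB.subsingleton i v (by simpa using hv)).anti ?_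
      rintro w ⟨hvw, j, hj, hw⟩
      obtain ⟨j, rfl⟩ := Fin.exists_castSucc_eq.2 (hj.trans (Fin.castSucc_lt_last i)).ne
      exact ⟨hvw, j, Fin.castSucc_lt_castSucc_iff.1 hj, by simpa using hw⟩

theorem exists_isBlockDecomposition [Finite V]
    (hpeel : ∀ S : Set V, S.Nonempty → ∃ P, G.IsPeelableBlock S P) (S : Set V) :
    ∃ t, ∃ B : Fin t → Set V, G.IsBlockDecomposition S B := by
  induction S using WellFoundedLT.induction with
  | _ S ih =>
  rcases S.eq_empty_or_nonempty with rfl | hS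
  · exact ⟨0, Fin.elim0, fun i => i.elim0, fun hv => hv.elim, fun i => i.elim0, fun i => i.elim0⟩
  obtain ⟨P, hPne, hPS, hP, hout⟩ := hpeel S hS
  obtain ⟨t, B, hB⟩ := ih (S \ P) (sdiff_lt hPS hPne.ne_empty)
  exact ⟨t + 1, _, hB.snoc hPS hP hout⟩

end SimpleGraph

/-- A connected triangle-free graph of maximum degree at most three on at least
seven vertices admits a partition of its vertex set into blocks, each inducing a
path or a cycle of length at least five, such that every vertex of a block has
at most one neighbour in earlier blocks. -/
theorem triangle_free_cubic_decomposition {ι : Type*} [Fintype ι] (H : SimpleGraph ι)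
    (hconn : H.Connected)
    (hdeg : ∀ v, (H.neighborSet v).ncard ≤ 3)
    (htf : H.CliqueFree 3)
    (hcard : 7 ≤ Fintype.card ι) :
    ∃ (t : ℕ) (B : Fin t → Finset ι),
      (∀ v : ι, ∃! i : Fin t, v ∈ B i) ∧
      (∀ i : Fin t,
        (∃ m : ℕ, Nonempty (H.induce (B i : Set ι) ≃g SimpleGraph.pathGraph m)) ∨
        (∃ m : ℕ, 5 ≤ m ∧
          Nonempty (H.induce (B i : Set ι) ≃g SimpleGraph.cycleGraph m))) ∧
      (∀ i : Fin t, ∀ v ∈ B i,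
        Set.ncard {w : ι | H.Adj v w ∧ ∃ j : Fin t, j < i ∧ w ∈ B j} ≤ 1) := by
  classical
  obtain ⟨t, B, hB⟩ := H.exists_isBlockDecomposition (fun _ hS =>
    H.exists_isPeelableBlock hdeg htf hconn (by rwa [Nat.card_eq_fintype_card]) hS) univ
  refine ⟨t, fun i => (B i).toFinset, fun v => ?_, fun i => ?_, fun i v hv => ?_⟩
  · simpa using hB.existsUnique (mem_univ v)
  · rw [Set.coe_toFinset]
    exact hB.isPathOrLongCycle i
  · simpa using hB.subsingleton i v (by simpa using hv)
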